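/- arXiv:2204.09285 — 9 statements merged into one kernel-verified Lean document; each statement's English description precedes it below -/
import Mathlib

section
/- For a small category C, the category of gaps J(C) is equivalent to the comma category Comma (𝟭 (Cᵒᵖ ⥤ Type)) Spec of the Isbell adjunction (equivalently, to the isomorphic comma category of O over the identity of (C ⥤ Type)ᵒᵖ). -/
/-! A gap `A × B ⟶ Hom` curries, in the presheaf variable, to a map of presheaves
`A ⟶ Spec B`, and the two naturality conditions of the gap become the naturality of this map
and of its values. Under currying, precomposing a gap with `f × g` becomes `f ≫ - ≫ Spec g`, so
the compatibility condition of a morphism of gaps is exactly the commuting square of a morphism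
in the comma category. Currying is a bijection whose round trips hold definitionally, so the two
categories are even isomorphic. -/

open CategoryTheory Opposite

universe u

variable (C : Type u) [SmallCategory C]

/-- The Isbell conjugation functor `O`, sending a presheaf `A : Cᵒᵖ ⥤ Type` to the copresheaf
`c ↦ Nat(A, yoneda.obj c)` of cocones under `A`. -/
def isbellO : (Cᵒᵖ ⥤ Type u) ⥤ (C ⥤ Type u)ᵒᵖ :=
  (coyoneda ⋙ (Functor.whiskeringLeft C (Cᵒᵖ ⥤ Type u) (Type u)).obj yoneda).rightOp

/-- The Isbell conjugation functor `Spec`, sending a copresheaf `B : C ⥤ Type` to the presheaf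
`c ↦ Nat(B, C(c, −))` of cones over `B`. -/
def isbellSpec : (C ⥤ Type u)ᵒᵖ ⥤ (Cᵒᵖ ⥤ Type u) :=
  coyoneda ⋙ (Functor.whiskeringLeft Cᵒᵖ (C ⥤ Type u) (Type u)).obj coyoneda

/-- The functor `Cᵒᵖ × C ⥤ Type` sending `(x, y)` to `A(x) × B(y)`. -/
@[simps]
def gapDom (A : Cᵒᵖ ⥤ Type u) (B : C ⥤ Type u) : Cᵒᵖ × C ⥤ Type u where
  obj x := A.obj x.1 × B.obj x.2
  map f := TypeCat.ofHom (fun p => (A.map f.1 p.1, B.map f.2 p.2))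
  map_id := by
    intro x
    ext p <;> simp [TypeCat.Fun.toFun_apply]
  map_comp := by
    intro x y z f g
    ext p <;> simp [TypeCat.Fun.toFun_apply]

/-- A gap from a presheaf `A` to a copresheaf `B` is a natural transformation from
`(x, y) ↦ A(x) × B(y)` to the hom functor `(x, y) ↦ C(x, y)`. -/
def Gaps (A : Cᵒᵖ ⥤ Type u) (B : C ⥤ Type u) : Type u :=
  gapDom C A B ⟶ Functor.hom C

/-- Functoriality of the gap domain: `gapDomMap f g : A' × B' ⟶ A × B` for `f : A' ⟶ A` and
`g : B' ⟶ B`. -/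
@[simps]
def gapDomMap {A A' : Cᵒᵖ ⥤ Type u} {B B' : C ⥤ Type u} (f : A' ⟶ A) (g : B' ⟶ B) :
    gapDom C A' B' ⟶ gapDom C A B where
  app x := TypeCat.ofHom (fun p => (f.app x.1 p.1, g.app x.2 p.2))
  naturality := by
    intro x y h
    ext p
    dsimp
    exact Prod.ext (NatTrans.naturality_apply f h.1 p.1) (NatTrans.naturality_apply g h.2 p.2)

/-- An object of the category of gaps: a presheaf `A`, a copresheaf `B`, and a gap `φ`
from `A` to `B`. -/
structure GapObj where
  A : Cᵒᵖ ⥤ Type u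
  B : C ⥤ Type u
  φ : Gaps C A B

variable {C}

/-- A morphism of gaps `(A, B, φ) → (A′, B′, φ′)`: a presheaf map `f : A ⟶ A′` and a
copresheaf map `g : B′ ⟶ B` such that `φ′(f a, b′) = φ(a, g b′)` for all `a, b′`. -/
@[ext]
structure GapHom (P Q : GapObj C) where
  f : P.A ⟶ Q.A
  g : Q.B ⟶ P.B
  w : gapDomMap C f (𝟙 Q.B) ≫ Q.φ = gapDomMap C (𝟙 P.A) g ≫ P.φ

instance : Category (GapObj C) where
  Hom := GapHom
  id P := { f := 𝟙 P.A, g := 𝟙 P.B, w := rfl }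
  comp u v :=
    { f := u.f ≫ v.f
      g := v.g ≫ u.g
      w := by
        apply NatTrans.ext
        funext x
        ext p
        show (_ : _) = _
        have hu := types_congr_hom (congrFun (congrArg NatTrans.app u.w) x) ((p.1, v.g.app x.2 p.2) : _ × _)
        have hv := types_congr_hom (congrFun (congrArg NatTrans.app v.w) x) ((u.f.app x.1 p.1, p.2) : _ × _)
        exact hv.trans hu }
  id_comp := by intros; apply GapHom.ext <;> simp
  comp_id := by intros; apply GapHom.ext <;> simp
  assoc := by intros; apply GapHom.ext <;> simp

variable (C)

namespace Gaps

variable {C} {A A' : Cᵒᵖ ⥤ Type u} {B B' : C ⥤ Type u}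

lemma app_map_fst (φ : Gaps C A B) {x x' : Cᵒᵖ} (h : x ⟶ x') {y : C} (a : A.obj x)
    (b : B.obj y) : φ.app (x', y) (A.map h a, b) = h.unop ≫ φ.app (x, y) (a, b) := by
  have := NatTrans.naturality_apply φ ((h, 𝟙 y) : ((x, y) : Cᵒᵖ × C) ⟶ (x', y))
    ((a, b) : (gapDom C A B).obj (x, y))
  simp only [gapDom_map, Functor.hom_map, Functor.map_id_apply, Category.comp_id] at this
  exact this

lemma app_map_snd (φ : Gaps C A B) {x : Cᵒᵖ} {y y' : C} (h : y ⟶ y') (a : A.obj x)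
    (b : B.obj y) : φ.app (x, y') (a, B.map h b) = φ.app (x, y) (a, b) ≫ h := by
  have := NatTrans.naturality_apply φ ((𝟙 x, h) : ((x, y) : Cᵒᵖ × C) ⟶ (x, y'))
    ((a, b) : (gapDom C A B).obj (x, y))
  simp only [gapDom_map, Functor.hom_map, Functor.map_id_apply, unop_id, Category.id_comp] at this
  exact this

def equivHomSpec : Gaps C A B ≃ (A ⟶ (isbellSpec C).obj (op B)) where
  toFun φ :=
    { app x := TypeCat.ofHom fun a =>
        { app y := TypeCat.ofHom fun b => φ.app (x, y) (a, b)
          naturality _ _ h := by ext b; exact φ.app_map_snd h a b }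
      naturality _ _ h := by
        ext a
        apply NatTrans.ext
        ext y b
        exact φ.app_map_fst h a b }
  invFun η :=
    { app p := TypeCat.ofHom fun ab => (η.app p.1 ab.1).app p.2 ab.2
      naturality _ _ h := by
        ext ⟨a, b⟩
        change (η.app _ (A.map h.1 a)).app _ (B.map h.2 b) =
          h.1.unop ≫ (η.app _ a).app _ b ≫ h.2
        rw [NatTrans.naturality_apply η h.1]
        exact congrArg (h.1.unop ≫ ·) (NatTrans.naturality_apply (η.app _ a) h.2 b) }
  left_inv _ := rfl
  right_inv _ := rfl

lemma equivHomSpec_gapDomMap_comp (f : A' ⟶ A) (g : B' ⟶ B) (φ : Gaps C A B) :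
    equivHomSpec (gapDomMap C f g ≫ φ) = f ≫ equivHomSpec φ ≫ (isbellSpec C).map g.op :=
  rfl

end Gaps

variable {C} in
lemma gapDomMap_comp_eq_iff {P Q : GapObj C} (f : P.A ⟶ Q.A) (g : Q.B ⟶ P.B) :
    gapDomMap C f (𝟙 Q.B) ≫ Q.φ = gapDomMap C (𝟙 P.A) g ≫ P.φ ↔
      f ≫ Gaps.equivHomSpec Q.φ = Gaps.equivHomSpec P.φ ≫ (isbellSpec C).map g.op := by
  refine (Gaps.equivHomSpec (A := P.A) (B := Q.B)).apply_eq_iff_eq.symm.trans ?_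
  rw [Gaps.equivHomSpec_gapDomMap_comp, Gaps.equivHomSpec_gapDomMap_comp]
  simp

def gapsToComma : GapObj C ⥤ Comma (𝟭 (Cᵒᵖ ⥤ Type u)) (isbellSpec C) where
  obj P := ⟨P.A, op P.B, Gaps.equivHomSpec P.φ⟩
  map u := ⟨u.f, u.g.op, (gapDomMap_comp_eq_iff u.f u.g).1 u.w⟩

def commaToGaps : Comma (𝟭 (Cᵒᵖ ⥤ Type u)) (isbellSpec C) ⥤ GapObj C where
  obj X := ⟨X.left, X.right.unop, Gaps.equivHomSpec.symm X.hom⟩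
  map u := ⟨u.left, u.right.unop, (gapDomMap_comp_eq_iff _ _).2 u.w⟩

/-- For a small category `C`, the category of gaps in `C` is equivalent to the comma category
`Comma (𝟭 (Cᵒᵖ ⥤ Type)) Spec` of the Isbell adjunction. -/
theorem gapCategory_equiv_comma :
    Nonempty (GapObj C ≌ Comma (𝟭 (Cᵒᵖ ⥤ Type u)) (isbellSpec C)) :=
  ⟨.mk (gapsToComma C) (commaToGaps C) (NatIso.ofComponents fun _ => Iso.refl _)
    (NatIso.ofComponents fun _ => Iso.refl _)⟩
end

section
/- For any adjunction F ⊣ G with F : A ⥤ B and G : B ⥤ A, the adjunction factors through the comma category: (1) the domain projection Dom : Comma (𝟭 A) G ⥤ A (sending (a, b, u) to a) has a fully faithful left adjoint J sending a to (a, F a, η_a : a ⟶ G(F a)); (2) the codomain projection Cod : Comma (𝟭 A) G ⥤ B (sending (a, b, u) to b) has a fully faithful right adjoint K sending b to (G b, b, 𝟙_{G b}); and (3) J ⋙ Cod = F and K ⋙ Dom = G, so F ⊣ G is the composite of the coreflection J ⊣ Dom and the reflection Cod ⊣ K. -/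
open CategoryTheory

universe v₁ u₁ v₂ u₂

variable {A : Type u₁} [Category.{v₁} A] {B : Type u₂} [Category.{v₂} B]

/-- The functor `A ⥤ Comma (𝟭 A) G` sending `a` to `(a, F a, η_a : a ⟶ G (F a))`. -/
@[simps]
def commaUnitEmbedding (F : A ⥤ B) (G : B ⥤ A) (adj : F ⊣ G) : A ⥤ Comma (𝟭 A) G where
  obj a := { left := a, right := F.obj a, hom := adj.unit.app a }
  map f := { left := f, right := F.map f, w := adj.unit.naturality f }

/-- The functor `B ⥤ Comma (𝟭 A) G` sending `b` to `(G b, b, 𝟙_{G b})`. -/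
@[simps]
def commaCounitEmbedding (F : A ⥤ B) (G : B ⥤ A) : B ⥤ Comma (𝟭 A) G where
  obj b := { left := G.obj b, right := b, hom := 𝟙 (G.obj b) }
  map g := { left := G.map g, right := g, w := by simp }

/-!
A morphism `(a, F a, η_a) ⟶ (a', b, u)` is determined by its `A`-component `f`: its `B`-component
must be the adjoint transpose of `f ≫ u`. Dually, a morphism `(a, b, u) ⟶ (G b', b', 𝟙)` is
determined by its `B`-component `g`, its `A`-component being `u ≫ G g`. These natural bijections
are the adjunctions `J ⊣ Dom` and `Cod ⊣ K`, and since `J ⋙ Dom = 𝟭 A` and `K ⋙ Cod = 𝟭 B` hold on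
the nose, `J` and `K` are fully faithful.
-/

section

variable {F : A ⥤ B} {G : B ⥤ A}

def commaUnitEmbeddingHomEquiv (adj : F ⊣ G) (a : A) (X : Comma (𝟭 A) G) :
    ((commaUnitEmbedding F G adj).obj a ⟶ X) ≃ (a ⟶ X.left) where
  toFun φ := φ.left
  invFun f :=
    { left := f
      right := F.map (f ≫ X.hom) ≫ adj.counit.app X.right
      w := (adj.eq_unit_comp_map_iff _ _).2 rfl }
  left_inv φ := Comma.hom_ext _ _ rfl ((adj.eq_unit_comp_map_iff _ _).1 φ.w)
  right_inv _ := rfl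

def commaUnitEmbeddingAdj (adj : F ⊣ G) : commaUnitEmbedding F G adj ⊣ Comma.fst (𝟭 A) G :=
  Adjunction.mkOfHomEquiv
    { homEquiv := commaUnitEmbeddingHomEquiv adj
      homEquiv_naturality_left_symm f g := Comma.hom_ext _ _ rfl <| by
        change F.map ((f ≫ g) ≫ _) ≫ _ = F.map f ≫ F.map (g ≫ _) ≫ _
        rw [Category.assoc, F.map_comp, Category.assoc]
      homEquiv_naturality_right _ _ := rfl }

noncomputable def commaUnitEmbeddingFullyFaithful (adj : F ⊣ G) :
    (commaUnitEmbedding F G adj).FullyFaithful :=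
  (commaUnitEmbeddingAdj adj).fullyFaithfulLOfCompIsoId (Iso.refl _)

def commaCounitEmbeddingHomEquiv (X : Comma (𝟭 A) G) (b : B) :
    (X.right ⟶ b) ≃ (X ⟶ (commaCounitEmbedding F G).obj b) where
  toFun g :=
    { left := X.hom ≫ G.map g
      right := g
      w := Category.comp_id _ }
  invFun φ := φ.right
  left_inv _ := rfl
  right_inv φ := Comma.hom_ext _ _ ((Category.comp_id _).symm.trans φ.w).symm rfl

end

def commaCounitEmbeddingAdj (F : A ⥤ B) (G : B ⥤ A) :
    Comma.snd (𝟭 A) G ⊣ commaCounitEmbedding F G :=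
  Adjunction.mkOfHomEquiv
    { homEquiv := commaCounitEmbeddingHomEquiv
      homEquiv_naturality_left_symm _ _ := rfl
      homEquiv_naturality_right f g := Comma.hom_ext _ _ (by
        change _ ≫ G.map (f ≫ g) = (_ ≫ G.map f) ≫ G.map g
        rw [G.map_comp, Category.assoc]) rfl }

noncomputable def commaCounitEmbeddingFullyFaithful (F : A ⥤ B) (G : B ⥤ A) :
    (commaCounitEmbedding F G).FullyFaithful :=
  (commaCounitEmbeddingAdj F G).fullyFaithfulROfCompIsoId (Iso.refl _)

/-- For any adjunction `F ⊣ G`, the adjunction factors through the comma category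
`Comma (𝟭 A) G`: the domain projection has a fully faithful left adjoint `a ↦ (a, F a, η_a)`,
the codomain projection has a fully faithful right adjoint `b ↦ (G b, b, 𝟙)`, and composing
these (co)reflections recovers `F` and `G`. -/
theorem adjunction_factors_through_comma (F : A ⥤ B) (G : B ⥤ A) (adj : F ⊣ G) :
    Nonempty (commaUnitEmbedding F G adj ⊣ Comma.fst (𝟭 A) G) ∧
    (commaUnitEmbedding F G adj).Full ∧ (commaUnitEmbedding F G adj).Faithful ∧
    Nonempty (Comma.snd (𝟭 A) G ⊣ commaCounitEmbedding F G) ∧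
    (commaCounitEmbedding F G).Full ∧ (commaCounitEmbedding F G).Faithful ∧
    commaUnitEmbedding F G adj ⋙ Comma.snd (𝟭 A) G = F ∧
    commaCounitEmbedding F G ⋙ Comma.fst (𝟭 A) G = G :=
  ⟨⟨commaUnitEmbeddingAdj adj⟩, (commaUnitEmbeddingFullyFaithful adj).full,
    (commaUnitEmbeddingFullyFaithful adj).faithful, ⟨commaCounitEmbeddingAdj F G⟩,
    (commaCounitEmbeddingFullyFaithful F G).full, (commaCounitEmbeddingFullyFaithful F G).faithful,
    rfl, rfl⟩
end

section
/- For any adjunction L ⊣ R, the nucleus functors form an adjunction N ⊣ M between the category of coalgebras of the induced comonad W and the category of algebras of the induced monad T; that is, N : Coalg(W) ⥤ Alg(T) and M : Alg(T) ⥤ Coalg(W) are well-defined functors and N is left adjoint to M. -/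
open CategoryTheory

universe v₁ u₁ v₂ u₂

variable {X : Type u₁} [Category.{v₁} X] {Y : Type u₂} [Category.{v₂} Y]

/-- The nucleus functor `N : Coalg(W) ⥤ Alg(T)`, sending a coalgebra `(B, β)` of the comonad
`W = L ∘ R` on `Y` to the algebra `(R B, R ε_B)` of the monad `T = R ∘ L` on `X`. -/
def nucleusN (L : X ⥤ Y) (R : Y ⥤ X) (adj : L ⊣ R) :
    Comonad.Coalgebra adj.toComonad ⥤ Monad.Algebra adj.toMonad where
  obj B :=
    { A := R.obj B.A
      a := R.map (adj.counit.app B.A)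
      unit := adj.right_triangle_components B.A
      assoc := by
        dsimp [Adjunction.toMonad]
        rw [← R.map_comp, ← R.map_comp, adj.counit_naturality] }
  map t :=
    { f := R.map t.f
      h := by
        dsimp [Adjunction.toMonad]
        rw [← R.map_comp, ← R.map_comp, adj.counit_naturality] }
  map_id := by
    intro B
    apply Monad.Algebra.Hom.ext
    exact R.map_id B.A
  map_comp := by
    intro B B' B'' t t'
    apply Monad.Algebra.Hom.ext
    exact R.map_comp t.f t'.f

/-- The nucleus functor `M : Alg(T) ⥤ Coalg(W)`, sending an algebra `(A, α)` of the monad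
`T = R ∘ L` on `X` to the coalgebra `(L A, L η_A)` of the comonad `W = L ∘ R` on `Y`. -/
def nucleusM (L : X ⥤ Y) (R : Y ⥤ X) (adj : L ⊣ R) :
    Monad.Algebra adj.toMonad ⥤ Comonad.Coalgebra adj.toComonad where
  obj A :=
    { A := L.obj A.A
      a := L.map (adj.unit.app A.A)
      counit := adj.left_triangle_components A.A
      coassoc := by
        dsimp [Adjunction.toComonad]
        rw [← L.map_comp, ← L.map_comp, adj.unit_naturality] }
  map f :=
    { f := L.map f.f
      h := by
        dsimp [Adjunction.toComonad]
        rw [← L.map_comp, ← L.map_comp, adj.unit_naturality] }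
  map_id := by
    intro A
    apply Comonad.Coalgebra.Hom.ext
    exact L.map_id A.A
  map_comp := by
    intro A A' A'' f f'
    apply Comonad.Coalgebra.Hom.ext
    exact L.map_comp f.f f'.f

/-!
The unit of `N ⊣ M` at a coalgebra `(B, β)` is `β` itself, a coalgebra map
`(B, β) ⟶ (L R B, L η_{R B}) = M (N (B, β))` by coassociativity; the counit at an algebra
`(A, α)` is `α : N (M (A, α)) = (R L A, R ε_{L A}) ⟶ (A, α)`, an algebra map by associativity.
Naturality of both is the defining property of (co)algebra morphisms, and the triangle
identities are `R β ≫ R ε_B = 𝟙` and `L η_A ≫ L α = 𝟙`, i.e. the counit law of `β` and the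
unit law of `α`.
-/

section NucleusAdjunction

variable {L : X ⥤ Y} {R : Y ⥤ X} (adj : L ⊣ R)

def nucleusUnit : 𝟭 (Comonad.Coalgebra adj.toComonad) ⟶ nucleusN L R adj ⋙ nucleusM L R adj where
  app B :=
    { f := B.a
      h := B.coassoc.symm }
  naturality _ _ t := by
    ext
    exact t.h.symm

def nucleusCounit : nucleusM L R adj ⋙ nucleusN L R adj ⟶ 𝟭 (Monad.Algebra adj.toMonad) where
  app A :=
    { f := A.a
      h := A.assoc.symm }
  naturality _ _ f := by
    ext
    exact f.h

lemma nucleus_left_triangle_components (B : Comonad.Coalgebra adj.toComonad) :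
    (nucleusN L R adj).map ((nucleusUnit adj).app B) ≫
      (nucleusCounit adj).app ((nucleusN L R adj).obj B) = 𝟙 _ := by
  ext
  exact (R.map_comp _ _).symm.trans ((congrArg R.map B.counit).trans (R.map_id _))

lemma nucleus_right_triangle_components (A : Monad.Algebra adj.toMonad) :
    (nucleusUnit adj).app ((nucleusM L R adj).obj A) ≫
      (nucleusM L R adj).map ((nucleusCounit adj).app A) = 𝟙 _ := by
  ext
  exact (L.map_comp _ _).symm.trans ((congrArg L.map A.unit).trans (L.map_id _))

end NucleusAdjunction

/-- For any adjunction `L ⊣ R`, the nucleus functors form an adjunction `N ⊣ M` between the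
category of coalgebras of the induced comonad and the category of algebras of the induced
monad. -/
theorem nucleus_adjunction (L : X ⥤ Y) (R : Y ⥤ X) (adj : L ⊣ R) :
    Nonempty (nucleusN L R adj ⊣ nucleusM L R adj) :=
  ⟨{ unit := nucleusUnit adj
     counit := nucleusCounit adj
     left_triangle_components := nucleus_left_triangle_components adj
     right_triangle_components := nucleus_right_triangle_components adj }⟩
end

section
/- Let L ⊣ R be an adjunction, (A, α) a T-algebra and (B, β) a W-coalgebra. Then the assignments j ↦ β ≫ L j and k ↦ R k ≫ α are mutually inverse bijections between: (1) the set of morphisms j : R B ⟶ A in X that are T-algebra morphisms from (R B, R ε_B) to (A, α), and (2) the set of morphisms k : B ⟶ L A in Y that are W-coalgebra morphisms from (B, β) to (L A, L η_A). -/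
open CategoryTheory

universe v₁ u₁ v₂ u₂

variable {X : Type u₁} [Category.{v₁} X] {Y : Type u₂} [Category.{v₂} Y]

namespace CategoryTheory.Adjunction

variable {L : X ⥤ Y} {R : Y ⥤ X} (adj : L ⊣ R) {A : X} {α : R.obj (L.obj A) ⟶ A}
  {B : Y} {β : B ⟶ L.obj (R.obj B)}

theorem isCoalgebraHom_coalgebra_comp_map
    (hβ_coassoc : β ≫ L.map (adj.unit.app (R.obj B)) = β ≫ L.map (R.map β))
    (j : R.obj B ⟶ A) :
    β ≫ L.map (R.map (β ≫ L.map j)) = (β ≫ L.map j) ≫ L.map (adj.unit.app A) :=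
  calc β ≫ L.map (R.map (β ≫ L.map j))
      = (β ≫ L.map (R.map β)) ≫ L.map (R.map (L.map j)) := by simp
    _ = (β ≫ L.map (adj.unit.app (R.obj B))) ≫ L.map (R.map (L.map j)) := by rw [hβ_coassoc]
    _ = (β ≫ L.map j) ≫ L.map (adj.unit.app A) := by
      simp only [Category.assoc, ← L.map_comp, unit_naturality]

theorem isAlgebraHom_map_comp_algebra
    (hα_assoc : R.map (adj.counit.app (L.obj A)) ≫ α = R.map (L.map α) ≫ α)
    (k : B ⟶ L.obj A) :
    R.map (L.map (R.map k ≫ α)) ≫ α = R.map (adj.counit.app B) ≫ R.map k ≫ α :=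
  calc R.map (L.map (R.map k ≫ α)) ≫ α
      = R.map (L.map (R.map k)) ≫ R.map (L.map α) ≫ α := by simp
    _ = R.map (L.map (R.map k)) ≫ R.map (adj.counit.app (L.obj A)) ≫ α := by rw [hα_assoc]
    _ = R.map (adj.counit.app B) ≫ R.map k ≫ α := by
      rw [← R.map_comp_assoc, adj.counit_naturality k, R.map_comp_assoc]

theorem map_coalgebra_comp_map_comp_algebra
    (hβ_counit : β ≫ adj.counit.app B = 𝟙 B) {j : R.obj B ⟶ A}
    (hj : R.map (L.map j) ≫ α = R.map (adj.counit.app B) ≫ j) :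
    R.map (β ≫ L.map j) ≫ α = j :=
  calc R.map (β ≫ L.map j) ≫ α
      = R.map β ≫ R.map (L.map j) ≫ α := by simp
    _ = R.map (β ≫ adj.counit.app B) ≫ j := by rw [hj, R.map_comp_assoc]
    _ = j := by simp [hβ_counit]

theorem coalgebra_comp_map_map_comp_algebra
    (hα_unit : adj.unit.app A ≫ α = 𝟙 A) {k : B ⟶ L.obj A}
    (hk : β ≫ L.map (R.map k) = k ≫ L.map (adj.unit.app A)) :
    β ≫ L.map (R.map k ≫ α) = k :=
  calc β ≫ L.map (R.map k ≫ α)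
      = (β ≫ L.map (R.map k)) ≫ L.map α := by simp
    _ = k ≫ L.map (adj.unit.app A ≫ α) := by rw [hk, L.map_comp, Category.assoc]
    _ = k := by simp [hα_unit]

end CategoryTheory.Adjunction

/-- Let `L ⊣ R` be an adjunction, `(A, α)` an algebra for the monad `T = R ∘ L` and `(B, β)` a
coalgebra for the comonad `W = L ∘ R`. Then `j ↦ β ≫ L j` and `k ↦ R k ≫ α` are mutually
inverse bijections between T-algebra morphisms `(R B, R ε_B) → (A, α)` and W-coalgebra
morphisms `(B, β) → (L A, L η_A)`. -/
theorem nucleus_transposition_bijection (L : X ⥤ Y) (R : Y ⥤ X) (adj : L ⊣ R)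
    (A : X) (α : R.obj (L.obj A) ⟶ A)
    (hα_unit : adj.unit.app A ≫ α = 𝟙 A)
    (hα_assoc : R.map (adj.counit.app (L.obj A)) ≫ α = R.map (L.map α) ≫ α)
    (B : Y) (β : B ⟶ L.obj (R.obj B))
    (hβ_counit : β ≫ adj.counit.app B = 𝟙 B)
    (hβ_coassoc : β ≫ L.map (adj.unit.app (R.obj B)) = β ≫ L.map (R.map β)) :
    ∃ (Φ : {j : R.obj B ⟶ A // R.map (L.map j) ≫ α = R.map (adj.counit.app B) ≫ j} →
           {k : B ⟶ L.obj A // β ≫ L.map (R.map k) = k ≫ L.map (adj.unit.app A)})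
      (Ψ : {k : B ⟶ L.obj A // β ≫ L.map (R.map k) = k ≫ L.map (adj.unit.app A)} →
           {j : R.obj B ⟶ A // R.map (L.map j) ≫ α = R.map (adj.counit.app B) ≫ j}),
      (∀ j, (Φ j).1 = β ≫ L.map j.1) ∧
      (∀ k, (Ψ k).1 = R.map k.1 ≫ α) ∧
      (∀ j, Ψ (Φ j) = j) ∧
      (∀ k, Φ (Ψ k) = k) :=
  ⟨fun j => ⟨β ≫ L.map j.1, adj.isCoalgebraHom_coalgebra_comp_map hβ_coassoc j.1⟩,
    fun k => ⟨R.map k.1 ≫ α, adj.isAlgebraHom_map_comp_algebra hα_assoc k.1⟩,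
    fun _ => rfl, fun _ => rfl,
    fun j => Subtype.ext (adj.map_coalgebra_comp_map_comp_algebra hβ_counit j.2),
    fun k => Subtype.ext (adj.coalgebra_comp_map_map_comp_algebra hα_unit k.2)⟩
end

section
/- Let L ⊣ R be an adjunction, (A, α) a T-algebra, (B, β) a W-coalgebra, g : A ⟶ R B a morphism with adjoint transpose g♯ = L g ≫ ε_B : L A ⟶ B, and let j : R B ⟶ A be a T-algebra morphism from (R B, R ε_B) to (A, α), with nucleus transpose k = β ≫ L j : B ⟶ L A. Then the pair of equations { g ≫ j = 𝟙_A and k ≫ L g = β } holds if and only if the pair of equations { R(g♯) ≫ j = α and k ≫ g♯ = 𝟙_B } holds. -/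
/-! Both equivalences split into an algebra half and a coalgebra half. On the algebra side,
`R (g♯) ≫ j = R (L (g ≫ j)) ≫ α` because `j` is an algebra morphism, and the unit law makes
`f ↦ R (L f) ≫ α` injective, so this equals `α` exactly when `g ≫ j = 𝟙`. Dually, the nucleus
transpose `k` is a coalgebra morphism by coassociativity, whence `k ≫ L g = β ≫ L (R (k ≫ g♯))`,
and the counit law makes `h ↦ β ≫ L (R h)` injective. -/

open CategoryTheory

universe v₁ u₁ v₂ u₂

variable {X : Type u₁} [Category.{v₁} X] {Y : Type u₂} [Category.{v₂} Y]

namespace CategoryTheory.Adjunction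

variable {L : X ⥤ Y} {R : Y ⥤ X} (adj : L ⊣ R)

section Algebra

variable {A : X} {α : R.obj (L.obj A) ⟶ A}

theorem unit_comp_map_map_comp_algebra (hα : adj.unit.app A ≫ α = 𝟙 A) {A' : X}
    (f : A' ⟶ A) : adj.unit.app A' ≫ R.map (L.map f) ≫ α = f := by
  rw [adj.unit_naturality_assoc f α, hα, Category.comp_id]

theorem map_map_comp_algebra_eq_iff (hα : adj.unit.app A ≫ α = 𝟙 A) (f : A ⟶ A) :
    R.map (L.map f) ≫ α = α ↔ f = 𝟙 A := by
  constructor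
  · intro hf
    rw [← adj.unit_comp_map_map_comp_algebra hα f, hf, hα]
  · rintro rfl
    simp

theorem map_map_comp_counit_comp_algebraHom {B : Y} {j : R.obj B ⟶ A}
    (hj : R.map (L.map j) ≫ α = R.map (adj.counit.app B) ≫ j) (g : A ⟶ R.obj B) :
    R.map (L.map g ≫ adj.counit.app B) ≫ j = R.map (L.map (g ≫ j)) ≫ α := by
  simp only [Functor.map_comp, Category.assoc, hj]

end Algebra

section Coalgebra

variable {B : Y} {β : B ⟶ L.obj (R.obj B)}

theorem coalgebra_comp_map_map_comp_counit (hβ : β ≫ adj.counit.app B = 𝟙 B) {B' : Y}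
    (h : B ⟶ B') : β ≫ L.map (R.map h) ≫ adj.counit.app B' = h := by
  rw [adj.counit_naturality h, reassoc_of% hβ]

theorem coalgebra_comp_map_map_eq_iff (hβ : β ≫ adj.counit.app B = 𝟙 B) (h : B ⟶ B) :
    β ≫ L.map (R.map h) = β ↔ h = 𝟙 B := by
  constructor
  · intro hh
    rw [← adj.coalgebra_comp_map_map_comp_counit hβ h, reassoc_of% hh, hβ]
  · rintro rfl
    simp

theorem coalgebraHom_comp_map {A : X} {k : B ⟶ L.obj A}
    (hk : k ≫ L.map (adj.unit.app A) = β ≫ L.map (R.map k)) (g : A ⟶ R.obj B) :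
    k ≫ L.map g = β ≫ L.map (R.map (k ≫ L.map g ≫ adj.counit.app B)) := by
  have hg : adj.unit.app A ≫ R.map (L.map g ≫ adj.counit.app B) = g := by
    rw [R.map_comp, adj.unit_naturality_assoc g, adj.right_triangle_components,
      Category.comp_id]
  calc k ≫ L.map g
      = (k ≫ L.map (adj.unit.app A)) ≫ L.map (R.map (L.map g ≫ adj.counit.app B)) := by
        rw [Category.assoc, ← L.map_comp, hg]
    _ = β ≫ L.map (R.map (k ≫ L.map g ≫ adj.counit.app B)) := by
        rw [hk, Category.assoc, ← L.map_comp, ← R.map_comp]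

theorem coalgebra_comp_map_comp_map_unit
    (hβ : β ≫ L.map (adj.unit.app (R.obj B)) = β ≫ L.map (R.map β)) {A : X}
    (j : R.obj B ⟶ A) :
    (β ≫ L.map j) ≫ L.map (adj.unit.app A) = β ≫ L.map (R.map (β ≫ L.map j)) := by
  simp only [Category.assoc, ← Functor.map_comp, ← adj.unit_naturality]
  simp only [Functor.map_comp, reassoc_of% hβ]

end Coalgebra

end CategoryTheory.Adjunction

theorem cut_equations_equivalent_general (L : X ⥤ Y) (R : Y ⥤ X) (adj : L ⊣ R)
    (A : X) (α : R.obj (L.obj A) ⟶ A)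
    (hα_unit : adj.unit.app A ≫ α = 𝟙 A)
    (B : Y) (β : B ⟶ L.obj (R.obj B))
    (hβ_counit : β ≫ adj.counit.app B = 𝟙 B)
    (hβ_coassoc : β ≫ L.map (adj.unit.app (R.obj B)) = β ≫ L.map (R.map β))
    (g : A ⟶ R.obj B)
    (j : R.obj B ⟶ A)
    (hj : R.map (L.map j) ≫ α = R.map (adj.counit.app B) ≫ j) :
    (g ≫ j = 𝟙 A ∧ (β ≫ L.map j) ≫ L.map g = β) ↔
    (R.map (L.map g ≫ adj.counit.app B) ≫ j = α ∧
      (β ≫ L.map j) ≫ (L.map g ≫ adj.counit.app B) = 𝟙 B) := by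
  refine and_congr ?_ ?_
  · rw [adj.map_map_comp_counit_comp_algebraHom hj, adj.map_map_comp_algebra_eq_iff hα_unit]
  · rw [adj.coalgebraHom_comp_map (adj.coalgebra_comp_map_comp_map_unit hβ_coassoc j),
      adj.coalgebra_comp_map_map_eq_iff hβ_counit]

/-- Let `L ⊣ R` be an adjunction, `(A, α)` a T-algebra, `(B, β)` a W-coalgebra,
`g : A ⟶ R B` with adjoint transpose `g♯ = L g ≫ ε_B`, and `j : R B ⟶ A` a T-algebra morphism
`(R B, R ε_B) → (A, α)`, with nucleus transpose `k = β ≫ L j`. Then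
`g ≫ j = 𝟙 A ∧ k ≫ L g = β` holds iff `R(g♯) ≫ j = α ∧ k ≫ g♯ = 𝟙 B` holds. -/
theorem cut_equations_equivalent (L : X ⥤ Y) (R : Y ⥤ X) (adj : L ⊣ R)
    (A : X) (α : R.obj (L.obj A) ⟶ A)
    (hα_unit : adj.unit.app A ≫ α = 𝟙 A)
    (hα_assoc : R.map (adj.counit.app (L.obj A)) ≫ α = R.map (L.map α) ≫ α)
    (B : Y) (β : B ⟶ L.obj (R.obj B))
    (hβ_counit : β ≫ adj.counit.app B = 𝟙 B)
    (hβ_coassoc : β ≫ L.map (adj.unit.app (R.obj B)) = β ≫ L.map (R.map β))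
    (g : A ⟶ R.obj B)
    (j : R.obj B ⟶ A)
    (hj : R.map (L.map j) ≫ α = R.map (adj.counit.app B) ≫ j) :
    (g ≫ j = 𝟙 A ∧ (β ≫ L.map j) ≫ L.map g = β) ↔
    (R.map (L.map g ≫ adj.counit.app B) ≫ j = α ∧
      (β ≫ L.map j) ≫ (L.map g ≫ adj.counit.app B) = 𝟙 B) :=
  cut_equations_equivalent_general L R adj A α hα_unit B β hβ_counit hβ_coassoc g j hj
end

section
/- Let L ⊣ R be an adjunction and fix objects A of X, B of Y and a morphism g : A ⟶ R B with adjoint transpose g♯ = L g ≫ ε_B. Then the assignments (j, k) ↦ (α, β, j•, k•) with α = R(g♯) ≫ j, β = k ≫ L g, j• = R k, k• = L j, and (α, β, j•, k•) ↦ (j, k) with j = j• ≫ α, k = β ≫ k•, are mutually inverse bijections between the set of simple cuts (A, B, g, j, k) and the set of full cuts (A, B, α, β, g, j•, k•) with the same underlying data (A, B, g). In particular every simple cut determines a unique full cut and vice versa. -/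
/-!
A simple cut is turned into a full cut by transporting `j` and `k` along the transpose:
`α = R g♯ ≫ j`, `β = k ≫ L g`. The retraction laws give `R k ≫ α = j` and `β ≫ L j = k`, which is
both the round trip on simple cuts and the interval laws; the (co)algebra laws of `α`, `β` are
laws (iii), (iv) moved across one naturality square of `ε`, resp. `η`. Conversely, the interval
laws let one write `ε_B ≫ β ≫ k• = L j• ≫ ε` and `j• ≫ α ≫ η = η ≫ R k•`, which together with the
(co)algebra laws turn the cut laws into (iii), (iv) for `(j• ≫ α, β ≫ k•)`.
-/

open CategoryTheory

universe v₁ u₁ v₂ u₂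

variable {X : Type u₁} [Category.{v₁} X] {Y : Type u₂} [Category.{v₂} Y]

/-- A simple cut for an adjunction `L ⊣ R`, on underlying data `A`, `B`, `g : A ⟶ R B`:
morphisms `j : R B ⟶ A` and `k : B ⟶ L A` such that `g` and `j`, resp. `k` and the adjoint
transpose `g♯ = L g ≫ ε_B`, form retractions, satisfying the simple-cut compatibility laws. -/
structure SimpleCut {L : X ⥤ Y} {R : Y ⥤ X} (adj : L ⊣ R)
    (A : X) (B : Y) (g : A ⟶ R.obj B) where
  j : R.obj B ⟶ A
  k : B ⟶ L.obj A
  retract_j : g ≫ j = 𝟙 A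
  retract_k : k ≫ (L.map g ≫ adj.counit.app B) = 𝟙 B
  law_j : R.map (adj.counit.app B) ≫ j = R.map (L.map j ≫ (L.map g ≫ adj.counit.app B)) ≫ j
  law_k : k ≫ L.map (adj.unit.app A) = k ≫ L.map (g ≫ R.map k)

/-- A full cut for an adjunction `L ⊣ R`, on underlying data `A`, `B`, `g : A ⟶ R B`:
a T-algebra structure `α` on `A`, a W-coalgebra structure `β` on `B`, and an interval
`(j•, k•)` satisfying the interval laws and the cut laws. -/
structure FullCut {L : X ⥤ Y} {R : Y ⥤ X} (adj : L ⊣ R)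
    (A : X) (B : Y) (g : A ⟶ R.obj B) where
  α : R.obj (L.obj A) ⟶ A
  β : B ⟶ L.obj (R.obj B)
  jb : R.obj B ⟶ R.obj (L.obj A)
  kb : L.obj (R.obj B) ⟶ L.obj A
  alg_unit : adj.unit.app A ≫ α = 𝟙 A
  alg_assoc : R.map (adj.counit.app (L.obj A)) ≫ α = R.map (L.map α) ≫ α
  coalg_counit : β ≫ adj.counit.app B = 𝟙 B
  coalg_coassoc : β ≫ L.map (adj.unit.app (R.obj B)) = β ≫ L.map (R.map β)
  interval_jb : jb = R.map (β ≫ kb)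
  interval_kb : kb = L.map (jb ≫ α)
  cut_one : g ≫ jb ≫ α = 𝟙 A
  cut_two : R.map (L.map g ≫ adj.counit.app B) ≫ jb ≫ α = α
  cut_three : β ≫ kb ≫ L.map g = β
  cut_four : β ≫ kb ≫ (L.map g ≫ adj.counit.app B) = 𝟙 B

variable {L : X ⥤ Y} {R : Y ⥤ X} {adj : L ⊣ R} {A : X} {B : Y} {g : A ⟶ R.obj B}

theorem SimpleCut.ext {s t : SimpleCut adj A B g} (hj : s.j = t.j) (hk : s.k = t.k) :
    s = t := by
  cases s; cases t; cases hj; cases hk; rfl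

theorem FullCut.ext {f f' : FullCut adj A B g} (hα : f.α = f'.α) (hβ : f.β = f'.β)
    (hjb : f.jb = f'.jb) (hkb : f.kb = f'.kb) : f = f' := by
  cases f; cases f'; cases hα; cases hβ; cases hjb; cases hkb; rfl

namespace SimpleCut

variable (s : SimpleCut adj A B g)

def α : R.obj (L.obj A) ⟶ A := R.map (L.map g ≫ adj.counit.app B) ≫ s.j

def β : B ⟶ L.obj (R.obj B) := s.k ≫ L.map g

theorem map_k_comp_α : R.map s.k ≫ s.α = s.j := by
  rw [α, ← Category.assoc, ← R.map_comp, s.retract_k, R.map_id, Category.id_comp]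

theorem β_comp_map_j : s.β ≫ L.map s.j = s.k := by
  rw [β, Category.assoc, ← L.map_comp, s.retract_j, L.map_id, Category.comp_id]

theorem unit_comp_α : adj.unit.app A ≫ s.α = 𝟙 A := by
  simp [α, s.retract_j]

theorem β_comp_counit : s.β ≫ adj.counit.app B = 𝟙 B := by
  rw [β, Category.assoc, s.retract_k]

theorem map_counit_comp_α :
    R.map (adj.counit.app (L.obj A)) ≫ s.α = R.map (L.map s.α) ≫ s.α :=
  calc R.map (adj.counit.app (L.obj A)) ≫ s.α
      = R.map (L.map (R.map (L.map g ≫ adj.counit.app B))) ≫ R.map (adj.counit.app B) ≫ s.j := by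
        rw [α, ← R.map_comp_assoc, ← adj.counit_naturality (L.map g ≫ adj.counit.app B),
          R.map_comp_assoc]
        rfl
    _ = R.map (L.map (R.map (L.map g ≫ adj.counit.app B))) ≫
          R.map (L.map s.j ≫ L.map g ≫ adj.counit.app B) ≫ s.j := by
        rw [s.law_j]
    _ = R.map (L.map s.α) ≫ s.α := by
        simp only [α, Functor.map_comp, Category.assoc]

theorem β_comp_map_unit :
    s.β ≫ L.map (adj.unit.app (R.obj B)) = s.β ≫ L.map (R.map s.β) :=
  calc s.β ≫ L.map (adj.unit.app (R.obj B))
      = s.k ≫ L.map (adj.unit.app A) ≫ L.map (R.map (L.map g)) := by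
        rw [β, Category.assoc, ← L.map_comp, ← adj.unit_naturality, L.map_comp]
    _ = s.k ≫ L.map (g ≫ R.map s.k) ≫ L.map (R.map (L.map g)) := by
        rw [← Category.assoc, s.law_k, Category.assoc]
    _ = s.β ≫ L.map (R.map s.β) := by
        simp only [β, Functor.map_comp, Category.assoc]

theorem map_counit_comp_map_k_comp_α :
    R.map (adj.counit.app B) ≫ R.map s.k ≫ s.α = R.map (adj.counit.app B) ≫ s.j :=
  calc R.map (adj.counit.app B) ≫ R.map s.k ≫ s.α
      = R.map (L.map (R.map s.k)) ≫ R.map (adj.counit.app (L.obj A)) ≫ s.α := by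
        rw [← R.map_comp_assoc, ← adj.counit_naturality s.k, R.map_comp_assoc]
    _ = R.map (L.map s.j) ≫ s.α := by
        rw [map_counit_comp_α, ← R.map_comp_assoc, ← L.map_comp, map_k_comp_α]
    _ = R.map (adj.counit.app B) ≫ s.j := by
        rw [s.law_j, α, ← R.map_comp_assoc]

def toFullCut : FullCut adj A B g where
  α := s.α
  β := s.β
  jb := R.map s.k
  kb := L.map s.j
  alg_unit := s.unit_comp_α
  alg_assoc := s.map_counit_comp_α
  coalg_counit := s.β_comp_counit
  coalg_coassoc := s.β_comp_map_unit
  interval_jb := by rw [β_comp_map_j]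
  interval_kb := by rw [map_k_comp_α]
  cut_one := by rw [map_k_comp_α, retract_j]
  cut_two := by
    rw [R.map_comp_assoc, map_counit_comp_map_k_comp_α, ← R.map_comp_assoc]; rfl
  cut_three := by rw [← Category.assoc, β_comp_map_j, β]
  cut_four := by rw [← Category.assoc, β_comp_map_j, retract_k]

end SimpleCut

namespace FullCut

variable (f : FullCut adj A B g)

theorem counit_comp_β_comp_kb :
    adj.counit.app B ≫ f.β ≫ f.kb = L.map f.jb ≫ adj.counit.app (L.obj A) := by
  rw [f.interval_jb]
  exact (adj.counit_naturality _).symm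

theorem jb_comp_α_comp_unit :
    f.jb ≫ f.α ≫ adj.unit.app A = adj.unit.app (R.obj B) ≫ R.map f.kb := by
  rw [f.interval_kb, ← Category.assoc]
  exact (adj.unit_naturality _).symm

theorem map_counit_comp_jb_comp_α :
    R.map (adj.counit.app B) ≫ f.jb ≫ f.α = R.map f.kb ≫ f.α := by
  rw [f.interval_jb, ← R.map_comp_assoc, counit_comp_β_comp_kb, R.map_comp_assoc,
    f.alg_assoc, ← R.map_comp_assoc, ← L.map_comp, ← f.interval_kb]

theorem kb_comp_map_unit :
    f.kb ≫ L.map (adj.unit.app A) = L.map (adj.unit.app (R.obj B)) ≫ L.map (R.map f.kb) := by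
  rw [f.interval_kb, ← L.map_comp, Category.assoc, jb_comp_α_comp_unit, L.map_comp,
    ← f.interval_kb]

theorem β_comp_kb_comp_map_unit :
    (f.β ≫ f.kb) ≫ L.map (adj.unit.app A) = (f.β ≫ f.kb) ≫ L.map (g ≫ R.map (f.β ≫ f.kb)) :=
  calc (f.β ≫ f.kb) ≫ L.map (adj.unit.app A)
      = f.β ≫ L.map (R.map f.β) ≫ L.map (R.map f.kb) := by
        rw [Category.assoc, kb_comp_map_unit, ← Category.assoc, f.coalg_coassoc, Category.assoc]
    _ = (f.β ≫ f.kb) ≫ L.map (g ≫ R.map (f.β ≫ f.kb)) := by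
        nth_rewrite 1 [← f.cut_three]
        simp only [Functor.map_comp, Category.assoc]

def toSimpleCut : SimpleCut adj A B g where
  j := f.jb ≫ f.α
  k := f.β ≫ f.kb
  retract_j := f.cut_one
  retract_k := by rw [Category.assoc, f.cut_four]
  law_j := by
    rw [map_counit_comp_jb_comp_α, ← f.interval_kb, R.map_comp_assoc, f.cut_two]
  law_k := f.β_comp_kb_comp_map_unit

end FullCut

def simpleCutEquivFullCut : SimpleCut adj A B g ≃ FullCut adj A B g where
  toFun := SimpleCut.toFullCut
  invFun := FullCut.toSimpleCut
  left_inv s := SimpleCut.ext s.map_k_comp_α s.β_comp_map_j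
  right_inv f := FullCut.ext f.cut_two ((Category.assoc _ _ _).trans f.cut_three)
    f.interval_jb.symm f.interval_kb.symm

/-- Every simple cut determines a unique full cut with the same underlying data `(A, B, g)`,
and vice versa: the assignments `(j, k) ↦ (α, β, j•, k•)` with `α = R(g♯) ≫ j`, `β = k ≫ L g`,
`j• = R k`, `k• = L j`, and `(α, β, j•, k•) ↦ (j, k)` with `j = j• ≫ α`, `k = β ≫ k•`, are
mutually inverse bijections. -/
theorem simpleCut_equiv_fullCut {L : X ⥤ Y} {R : Y ⥤ X} (adj : L ⊣ R)
    (A : X) (B : Y) (g : A ⟶ R.obj B) :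
    ∃ (Φ : SimpleCut adj A B g → FullCut adj A B g)
      (Ψ : FullCut adj A B g → SimpleCut adj A B g),
      (∀ s, (Φ s).α = R.map (L.map g ≫ adj.counit.app B) ≫ s.j ∧
            (Φ s).β = s.k ≫ L.map g ∧
            (Φ s).jb = R.map s.k ∧
            (Φ s).kb = L.map s.j) ∧
      (∀ f, (Ψ f).j = f.jb ≫ f.α ∧ (Ψ f).k = f.β ≫ f.kb) ∧
      (∀ s, Ψ (Φ s) = s) ∧
      (∀ f, Φ (Ψ f) = f) :=
  ⟨simpleCutEquivFullCut, simpleCutEquivFullCut.symm, fun _ => ⟨rfl, rfl, rfl, rfl⟩,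
    fun _ => ⟨rfl, rfl⟩, simpleCutEquivFullCut.left_inv, simpleCutEquivFullCut.right_inv⟩
end

section
/- Let L ⊣ R be an adjunction and (A, B, α, β, g, j•, k•) a full cut. If the two components of the interval coincide, in the sense that k• is the adjoint transpose of j• along L ⊣ R (i.e. k• = L(j•) ≫ ε_{L A}), then j = j• ≫ α : R B ⟶ A and k = β ≫ k• : B ⟶ L A are isomorphisms; in particular A ≅ R B and B ≅ L A. -/
/-!
The inverses are the obvious candidates: `g` for `j` and the transpose `g♯ = L g ≫ ε_B` for `k`;
the cut laws already say `g ≫ j = 𝟙` and `k ≫ g♯ = 𝟙`. Coincidence of the interval,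
`k• = L j• ≫ ε`, combined with `j• = R k` and counit naturality, gives `ε_B ≫ k = k•` and
`k• ≫ g♯ = ε_B`. Since `L j = k•`, the first turns `g♯ ≫ k` into `L (g ≫ j) = 𝟙`, and the second
says that the transpose of `j ≫ g` is `ε_B`, the transpose of `𝟙`.
-/

open CategoryTheory

universe v₁ u₁ v₂ u₂

variable {X : Type u₁} [Category.{v₁} X] {Y : Type u₂} [Category.{v₂} Y]

namespace FullCut

variable {L : X ⥤ Y} {R : Y ⥤ X} {adj : L ⊣ R} {A : X} {B : Y} {g : A ⟶ R.obj B}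

abbrev j (f : FullCut adj A B g) : R.obj B ⟶ A := f.jb ≫ f.α

abbrev k (f : FullCut adj A B g) : B ⟶ L.obj A := f.β ≫ f.kb

def IsCoincident (f : FullCut adj A B g) : Prop :=
  f.kb = L.map f.jb ≫ adj.counit.app (L.obj A)

variable (f : FullCut adj A B g)

theorem comp_j : g ≫ f.j = 𝟙 A := f.cut_one

theorem k_comp_transpose : f.k ≫ L.map g ≫ adj.counit.app B = 𝟙 B := by
  simpa only [Category.assoc] using f.cut_four

theorem map_j : L.map f.j = f.kb := f.interval_kb.symm

variable {f}

theorem counit_comp_k (hf : f.IsCoincident) : adj.counit.app B ≫ f.k = f.kb :=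
  calc adj.counit.app B ≫ f.k = L.map (R.map f.k) ≫ adj.counit.app (L.obj A) :=
        (adj.counit_naturality _).symm
    _ = f.kb := by rw [← f.interval_jb, ← hf]

theorem kb_comp_transpose (hf : f.IsCoincident) :
    f.kb ≫ L.map g ≫ adj.counit.app B = adj.counit.app B :=
  calc f.kb ≫ L.map g ≫ adj.counit.app B
      = L.map f.jb ≫ L.map (R.map (L.map g ≫ adj.counit.app B)) ≫ adj.counit.app B := by
        rw [hf, Category.assoc]
        exact congrArg _ (adj.counit.naturality _).symm
    _ = L.map (R.map (f.k ≫ L.map g ≫ adj.counit.app B)) ≫ adj.counit.app B := by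
        rw [f.interval_jb, ← L.map_comp_assoc, ← R.map_comp]
    _ = adj.counit.app B := by
        rw [f.k_comp_transpose, R.map_id, L.map_id, Category.id_comp]

theorem transpose_comp_k (hf : f.IsCoincident) :
    (L.map g ≫ adj.counit.app B) ≫ f.k = 𝟙 (L.obj A) := by
  rw [Category.assoc, counit_comp_k hf, ← f.map_j, ← L.map_comp, f.comp_j, L.map_id]

theorem j_comp (hf : f.IsCoincident) : f.j ≫ g = 𝟙 (R.obj B) := by
  apply (adj.homEquiv _ _).symm.injective
  rw [adj.homEquiv_naturality_left_symm, adj.homEquiv_symm_id, adj.homEquiv_counit, f.map_j,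
    kb_comp_transpose hf]

theorem isIso_j (hf : f.IsCoincident) : IsIso f.j := ⟨g, j_comp hf, f.comp_j⟩

theorem isIso_k (hf : f.IsCoincident) : IsIso f.k :=
  ⟨_, f.k_comp_transpose, transpose_comp_k hf⟩

end FullCut

/-- If in a full cut the two components of the interval coincide, i.e. `k•` is the adjoint
transpose of `j•` along `L ⊣ R`, then `j = j• ≫ α` and `k = β ≫ k•` are isomorphisms;
in particular `A ≅ R B` and `B ≅ L A`. -/
theorem fullCut_coincident_interval_iso {L : X ⥤ Y} {R : Y ⥤ X} (adj : L ⊣ R)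
    {A : X} {B : Y} {g : A ⟶ R.obj B} (f : FullCut adj A B g)
    (hcoin : f.kb = L.map f.jb ≫ adj.counit.app (L.obj A)) :
    IsIso (f.jb ≫ f.α) ∧ IsIso (f.β ≫ f.kb) ∧
    Nonempty (A ≅ R.obj B) ∧ Nonempty (B ≅ L.obj A) := by
  have := FullCut.isIso_j hcoin
  have := FullCut.isIso_k hcoin
  exact ⟨inferInstance, inferInstance, ⟨(asIso f.j).symm⟩, ⟨asIso f.k⟩⟩
end

section
/- Let C be a small category, (A, φ) a cut-coalgebra over C, and c an object of C. The pair (yoneda.obj c, identity of O(yoneda.obj c)) is a cut-coalgebra, and the set of cut-coalgebra morphisms from (A, φ) to (yoneda.obj c, 𝟙) is in bijection, naturally in c, with the set { δ ∈ Nat(A, yoneda.obj c) | φ_c(δ) = δ } of cocones under A with vertex c that are fixed by the idempotent φ. -/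
open CategoryTheory Opposite

universe u

variable (C : Type u) [SmallCategory C]

/-- `(A, φ)` is a cut-coalgebra when `φ : O A ⟶ O A` is an idempotent copresheaf endomorphism
whose image `Spec φ` splits through `A`. -/
def IsCutCoalgebra (A : Cᵒᵖ ⥤ Type u)
    (φ : ((isbellO C).obj A).unop ⟶ ((isbellO C).obj A).unop) : Prop :=
  φ ≫ φ = φ ∧
  ∃ (q : (isbellSpec C).obj ((isbellO C).obj A) ⟶ A)
    (s : A ⟶ (isbellSpec C).obj ((isbellO C).obj A)),
    s ≫ q = 𝟙 A ∧ q ≫ s = (isbellSpec C).map φ.op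

/-- The set of morphisms of cut-coalgebras from `(A, φ)` to `(A′, φ′)`: presheaf maps
`f : A ⟶ A′` with `φ′ ≫ O f = O f ≫ φ`. -/
def CutCoalgebraHoms (A A' : Cᵒᵖ ⥤ Type u)
    (φ : ((isbellO C).obj A).unop ⟶ ((isbellO C).obj A).unop)
    (φ' : ((isbellO C).obj A').unop ⟶ ((isbellO C).obj A').unop) : Type u :=
  { f : A ⟶ A' // φ' ≫ ((isbellO C).map f).unop = ((isbellO C).map f).unop ≫ φ }

namespace CutCoalgebra

variable {C}

def specOYonedaToYoneda (c : C) :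
    (isbellSpec C).obj ((isbellO C).obj (yoneda.obj c)) ⟶ yoneda.obj c where
  app _ := TypeCat.ofHom fun η => η.app c (𝟙 (yoneda.obj c))
  naturality _ _ _ := rfl

def yonedaToSpecOYoneda (c : C) :
    yoneda.obj c ⟶ (isbellSpec C).obj ((isbellO C).obj (yoneda.obj c)) where
  app d := TypeCat.ofHom fun h =>
    { app := fun x => TypeCat.ofHom fun (g : yoneda.obj c ⟶ yoneda.obj x) =>
        (h ≫ g.app (op c) (𝟙 c) : unop d ⟶ x)
      naturality := fun _ _ _ => by
        ext
        exact (Category.assoc _ _ _).symm }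
  naturality _ _ _ := by
    ext
    exact NatTrans.ext (funext fun _ => by ext; exact Category.assoc _ _ _)

def specOYonedaIso (c : C) :
    (isbellSpec C).obj ((isbellO C).obj (yoneda.obj c)) ≅ yoneda.obj c where
  hom := specOYonedaToYoneda c
  inv := yonedaToSpecOYoneda c
  hom_inv_id := by
    ext d η
    refine NatTrans.ext (funext fun x => ConcreteCategory.hom_ext _ _ fun g => ?_)
    obtain ⟨u, rfl⟩ := yoneda.map_surjective (g : yoneda.obj c ⟶ yoneda.obj x)
    -- `η` is natural, so its value at `yoneda.map u` is determined by its value at `𝟙`.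
    have hη : η.app x (𝟙 (yoneda.obj c) ≫ yoneda.map u) = η.app c (𝟙 _) ≫ u :=
      types_congr_hom (η.naturality u) (𝟙 (yoneda.obj c))
    show η.app c (𝟙 _) ≫ (𝟙 c ≫ u) = η.app x (yoneda.map u)
    rw [Category.id_comp] at hη ⊢
    exact hη.symm
  inv_hom_id := by
    ext
    exact Category.comp_id _

lemma isCutCoalgebra_yoneda_id (c : C) : IsCutCoalgebra C (yoneda.obj c) (𝟙 _) := by
  refine ⟨Category.comp_id _, (specOYonedaIso c).hom, (specOYonedaIso c).inv,
    (specOYonedaIso c).inv_hom_id, ?_⟩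
  rw [(specOYonedaIso c).hom_inv_id]
  exact ((isbellSpec C).map_id _).symm

/-- By the Yoneda lemma, the condition need only be checked at the identity of `yoneda.obj c`. -/
lemma isCutCoalgebraHom_yoneda_iff (A : Cᵒᵖ ⥤ Type u)
    (φ : ((isbellO C).obj A).unop ⟶ ((isbellO C).obj A).unop) {c : C} (δ : A ⟶ yoneda.obj c) :
    𝟙 _ ≫ ((isbellO C).map δ).unop = ((isbellO C).map δ).unop ≫ φ ↔ φ.app c δ = δ := by
  constructor
  · intro hδ
    have hδc : δ ≫ 𝟙 _ = φ.app c (δ ≫ 𝟙 _) :=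
      types_congr_hom (congrArg (fun t => t.app c) hδ) (𝟙 (yoneda.obj c))
    rw [Category.comp_id] at hδc
    exact hδc.symm
  · intro hδ
    refine NatTrans.ext (funext fun x => ConcreteCategory.hom_ext _ _ fun g => ?_)
    obtain ⟨u, rfl⟩ := yoneda.map_surjective (g : yoneda.obj c ⟶ yoneda.obj x)
    have hφ : φ.app x (δ ≫ yoneda.map u) = φ.app c δ ≫ yoneda.map u :=
      types_congr_hom (φ.naturality u) δ
    show δ ≫ yoneda.map u = φ.app x (δ ≫ yoneda.map u)
    rw [hφ, hδ]

def homsYonedaEquiv (A : Cᵒᵖ ⥤ Type u)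
    (φ : ((isbellO C).obj A).unop ⟶ ((isbellO C).obj A).unop) (c : C) :
    CutCoalgebraHoms C A (yoneda.obj c) φ (𝟙 _) ≃ { δ : A ⟶ yoneda.obj c // φ.app c δ = δ } :=
  Equiv.subtypeEquivRight (isCutCoalgebraHom_yoneda_iff A φ)

end CutCoalgebra

theorem cutCoalgebraHoms_to_representable (A : Cᵒᵖ ⥤ Type u)
    (φ : ((isbellO C).obj A).unop ⟶ ((isbellO C).obj A).unop) :
    (∀ c : C, IsCutCoalgebra C (yoneda.obj c) (𝟙 _)) ∧
    ∃ e : ∀ c : C, CutCoalgebraHoms C A (yoneda.obj c) φ (𝟙 _) ≃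
        { δ : A ⟶ yoneda.obj c // φ.app c δ = δ },
      ∀ (c c' : C) (u : c ⟶ c') (f : CutCoalgebraHoms C A (yoneda.obj c) φ (𝟙 _))
        (hf : 𝟙 _ ≫ ((isbellO C).map (f.1 ≫ yoneda.map u)).unop
            = ((isbellO C).map (f.1 ≫ yoneda.map u)).unop ≫ φ),
        (e c' ⟨f.1 ≫ yoneda.map u, hf⟩).1 = (e c f).1 ≫ yoneda.map u :=
  ⟨CutCoalgebra.isCutCoalgebra_yoneda_id, CutCoalgebra.homsYonedaEquiv A φ, fun _ _ _ _ _ => rfl⟩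
end

section
/- Let C be a small category with all small colimits. Then for every presheaf A : Cᵒᵖ ⥤ Type and every idempotent natural transformation φ : O A ⟶ O A of the copresheaf O A (where (O A)(c) = Nat(A, yoneda.obj c)), the copresheaf of φ-fixed cocones, sending c to { δ ∈ Nat(A, yoneda.obj c) | φ_c(δ) = δ }, is corepresentable: there is an object r of C and a natural isomorphism between this copresheaf and C(r, −). In particular, a category with all loose (small) colimits has all tight colimits. -/
/-!
The copresheaf `coconesUnder C A` is corepresented by the loose colimit `ℓ` of `A`
(the value at `A` of the left Kan extension of `𝟭 C` along the Yoneda embedding). By the Yoneda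
lemma, an endomorphism `φ` of a copresheaf corepresented by `ℓ` is precomposition with an
endomorphism `e` of `ℓ`, so its fixed points at `c` are the maps `g : ℓ ⟶ c` with `e ≫ g = g`,
i.e. the maps out of the coequalizer of `e` and `𝟙 ℓ`.
-/

open CategoryTheory Opposite Limits

universe u

variable (C : Type u) [SmallCategory C]

/-- The copresheaf of coconesUnder under a presheaf `A`: `c ↦ Nat(A, yoneda.obj c)`. -/
def coconesUnder (A : Cᵒᵖ ⥤ Type u) : C ⥤ Type u :=
  yoneda ⋙ coyoneda.obj (op A)

/-- Given an idempotent `φ` on the copresheaf of coconesUnder under `A`, the copresheaf of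
`φ`-fixed coconesUnder: `c ↦ { δ ∈ Nat(A, yoneda.obj c) | φ_c(δ) = δ }`. -/
@[simps]
def fixedCocones (A : Cᵒᵖ ⥤ Type u) (φ : coconesUnder C A ⟶ coconesUnder C A) : C ⥤ Type u where
  obj c := { δ : A ⟶ yoneda.obj c // φ.app c δ = δ }
  map {c c'} f := TypeCat.ofHom fun δ =>
    ⟨δ.1 ≫ yoneda.map f, by
      have h : φ.app c' (δ.1 ≫ yoneda.map f) = φ.app c δ.1 ≫ yoneda.map f :=
        ConcreteCategory.congr_hom (φ.naturality f) δ.1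
      rw [h, δ.2]⟩
  map_id := by
    intro c
    apply ConcreteCategory.hom_ext
    intro δ
    apply Subtype.ext
    simp
  map_comp := by
    intro c c' c'' f g
    apply ConcreteCategory.hom_ext
    intro δ
    apply Subtype.ext
    simp

section FixedPoints

variable {D : Type*} [Category D] {F : D ⥤ Type*} (φ : F ⟶ F)

def fixedPointsFunctor : D ⥤ Type _ where
  obj Y := { x : F.obj Y // φ.app Y x = x }
  map f := TypeCat.ofHom fun x => ⟨F.map f x.1, by rw [NatTrans.naturality_apply, x.2]⟩

end FixedPoints

namespace CategoryTheory.Functor.CorepresentableBy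

universe v

variable {D : Type*} [Category.{v} D] {F : D ⥤ Type v} {ℓ : D}
  (hF : F.CorepresentableBy ℓ) (φ : F ⟶ F)

/-- The endomorphism `e` of `ℓ` such that `φ` is precomposition with `e` (Yoneda). -/
def endo : ℓ ⟶ ℓ :=
  hF.homEquiv.symm (φ.app ℓ (hF.homEquiv (𝟙 ℓ)))

lemma app_homEquiv {Y : D} (g : ℓ ⟶ Y) :
    φ.app Y (hF.homEquiv g) = hF.homEquiv (hF.endo φ ≫ g) := by
  rw [hF.homEquiv_eq g, NatTrans.naturality_apply, hF.homEquiv_comp, endo,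
    Equiv.apply_symm_apply]

noncomputable def fixedPoints [HasCoequalizer (hF.endo φ) (𝟙 ℓ)] :
    (fixedPointsFunctor φ).CorepresentableBy (coequalizer (hF.endo φ) (𝟙 ℓ)) where
  homEquiv {Y} := (Cofork.IsColimit.homIso (coequalizerIsCoequalizer _ _) Y).trans
    (hF.homEquiv.subtypeEquiv fun g => by
      rw [app_homEquiv, Category.id_comp, hF.homEquiv.apply_eq_iff_eq])
  homEquiv_comp g f := by
    apply Subtype.ext
    change hF.homEquiv (coequalizer.π _ _ ≫ f ≫ g) =
      F.map g (hF.homEquiv (coequalizer.π _ _ ≫ f))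
    rw [← Category.assoc, hF.homEquiv_comp]

end CategoryTheory.Functor.CorepresentableBy

def restrictedULiftYonedaIdIsoYoneda : Presheaf.restrictedULiftYoneda.{u} (𝟭 C) ≅ yoneda :=
  NatIso.ofComponents fun _ => NatIso.ofComponents fun _ => Equiv.ulift.toIso

noncomputable def coconesUnderCorepresentableBy [HasColimits C] (A : Cᵒᵖ ⥤ Type u) :
    (coconesUnder C A).CorepresentableBy ((uliftYoneda.{u}.leftKanExtension (𝟭 C)).obj A) :=
  let adj := Presheaf.uliftYonedaAdjunction.{0} _ (uliftYoneda.{u}.leftKanExtensionUnit (𝟭 C))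
  (adj.corepresentableBy A).ofIso
    (Functor.isoWhiskerRight (restrictedULiftYonedaIdIsoYoneda C) (coyoneda.obj (op A)))

theorem fixedCocones_corepresentable [HasColimits C]
    (A : Cᵒᵖ ⥤ Type u) (φ : coconesUnder C A ⟶ coconesUnder C A) :
    ∃ r : C, Nonempty (fixedCocones C A φ ≅ coyoneda.obj (op r)) :=
  ⟨_, ⟨((coconesUnderCorepresentableBy C A).fixedPoints φ).toIso.symm⟩⟩
end
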